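/- arXiv:2603.17029 — 8 statements merged into one kernel-verified Lean document; each statement's English description precedes it below -/
import Mathlib

section
/- There is no edge-regular graph with parameters (8,4,2); that is, there is no 4-regular graph on 8 vertices in which every pair of adjacent vertices has exactly 2 common neighbours. -/
/-!
Fix a vertex `v` of an edge-regular `(n, k, ℓ)` graph and count the edges between its
neighbourhood `N` and the set `M` of the `n - k - 1` vertices distinct from and not adjacent
to `v`. A neighbour of `v` is adjacent to `v`, to `ℓ` vertices of `N` and hence to exactly
`k - ℓ - 1` vertices of `M`. A vertex of `M` has at most `|M| - 1 = n - k - 2` neighbours in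
`M`, hence at least `2k + 2 - n` in `N`. So `(n - k - 1)(2k + 2 - n) ≤ k(k - ℓ - 1)`, which
fails for `(8, 4, 2)`: `3 · 2 > 4 · 1`.
-/

open Finset

namespace SimpleGraph

variable {V : Type*} [Fintype V] (G : SimpleGraph V) [DecidableRel G.Adj]

structure IsEdgeRegularWith (n k ℓ : ℕ) : Prop where
  card : Fintype.card V = n
  regular : G.IsRegularOfDegree k
  of_adj : ∀ v w : V, G.Adj v w → Fintype.card (G.commonNeighbors v w) = ℓ

variable {G} [DecidableEq V] {n k ℓ : ℕ} {v w : V}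

theorem IsRegularOfDegree.add_add_two_le_card_add_card_filter_adj
    (h : G.IsRegularOfDegree k) (hw : w ∈ Gᶜ.neighborFinset v) :
    k + k + 2 ≤ Fintype.card V + #{u ∈ G.neighborFinset v | G.Adj u w} := by
  have hsplit := card_inter_add_card_sdiff (G.neighborFinset w) (G.neighborFinset v)
  have hinter :
      G.neighborFinset w ∩ G.neighborFinset v = {u ∈ G.neighborFinset v | G.Adj u w} := by
    ext u
    simp [adj_comm, and_comm]
  have hsdiff : G.neighborFinset w \ G.neighborFinset v ⊆ (Gᶜ.neighborFinset v).erase w := by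
    intro u hu
    rw [mem_sdiff, mem_neighborFinset, mem_neighborFinset] at hu
    rw [mem_neighborFinset, compl_adj] at hw
    simp only [mem_erase, mem_neighborFinset, compl_adj]
    exact ⟨hu.1.ne', fun hvu ↦ hw.2 (hvu ▸ hu.1.symm), hu.2⟩
  have hcompl_pos : 0 < Gᶜ.degree v := card_pos.2 ⟨w, hw⟩
  have hcompl_le := card_le_card hsdiff
  rw [card_erase_of_mem hw, card_neighborFinset_eq_degree, h.compl v] at hcompl_le
  rw [h.compl v] at hcompl_pos
  rw [hinter, card_neighborFinset_eq_degree, h w] at hsplit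
  omega

theorem IsEdgeRegularWith.card_filter_adj_compl_neighborFinset_add_add_one
    (h : G.IsEdgeRegularWith n k ℓ) (hvw : G.Adj v w) :
    #{u ∈ Gᶜ.neighborFinset v | G.Adj w u} + ℓ + 1 = k := by
  have hsplit := card_inter_add_card_sdiff (G.neighborFinset w) (G.neighborFinset v)
  have hinter :
      G.neighborFinset w ∩ G.neighborFinset v = (G.commonNeighbors v w).toFinset := by
    ext u
    simp [mem_commonNeighbors, and_comm]
  have hsdiff : G.neighborFinset w \ G.neighborFinset v =
      insert v {u ∈ Gᶜ.neighborFinset v | G.Adj w u} := by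
    ext u
    simp only [mem_sdiff, mem_neighborFinset, mem_insert, mem_filter, compl_adj]
    constructor
    · rintro ⟨hwu, hvu⟩
      by_cases huv : u = v
      · exact .inl huv
      · exact .inr ⟨⟨Ne.symm huv, hvu⟩, hwu⟩
    · rintro (rfl | ⟨⟨-, hvu⟩, hwu⟩)
      · exact ⟨hvw.symm, G.loopless.irrefl u⟩
      · exact ⟨hwu, hvu⟩
  rw [hinter, Set.toFinset_card, h.of_adj v w hvw, hsdiff, card_insert_of_notMem (by simp),
    card_neighborFinset_eq_degree, h.regular w] at hsplit
  omega

theorem IsEdgeRegularWith.param_le (h : G.IsEdgeRegularWith n k ℓ) (hn : 0 < n) :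
    (n - k - 1) * (k + k + 2 - n) ≤ k * (k - ℓ - 1) := by
  obtain ⟨v⟩ : Nonempty V := by rw [← Fintype.card_pos_iff, h.card]; exact hn
  have hcount := card_mul_le_card_mul' G.Adj (s := G.neighborFinset v)
    (t := Gᶜ.neighborFinset v) (n := k + k + 2 - n) (m := k - ℓ - 1) ?_ ?_
  · rwa [card_neighborFinset_eq_degree, card_neighborFinset_eq_degree, h.regular.compl v,
      h.regular v, h.card, Nat.sub_right_comm] at hcount
  · intro w hw
    have := h.regular.add_add_two_le_card_add_card_filter_adj hw
    rw [h.card] at this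
    simp only [bipartiteBelow]
    omega
  · intro w hw
    have := h.card_filter_adj_compl_neighborFinset_add_add_one ((mem_neighborFinset _ _ _).1 hw)
    simp only [bipartiteAbove]
    omega

end SimpleGraph

/-- There is no edge-regular graph with parameters (8,4,2). -/
theorem no_edge_regular_8_4_2 (V : Type*) [Fintype V] [DecidableEq V]
    (G : SimpleGraph V) [DecidableRel G.Adj]
    (hcard : Fintype.card V = 8)
    (hreg : G.IsRegularOfDegree 4)
    (hlam : ∀ u v : V, G.Adj u v → Fintype.card (G.commonNeighbors u v) = 2) :
    False := by
  have := (SimpleGraph.IsEdgeRegularWith.mk hcard hreg hlam).param_le (by norm_num)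
  norm_num at this
end

section
/- Let Γ be an edge-regular graph with parameters (v,k,λ)=(μλ(λ+2), λ(μ+1), λ) for positive integers λ, μ, and let C be a clique of size λ+2 in Γ. Then every vertex of Γ outside C is adjacent to exactly one vertex of C; that is, C is a regular clique with nexus 1. -/
/-- In an edge-regular graph with parameters (μλ(λ+2), λ(μ+1), λ), any clique
of size λ+2 is a regular clique with nexus 1. -/
theorem clique_is_regular_nexus_one (V : Type*) [Fintype V] [DecidableEq V]
    (G : SimpleGraph V) [DecidableRel G.Adj] (lam mu : ℕ)
    (hlam_pos : 1 ≤ lam) (hmu_pos : 1 ≤ mu)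
    (hcard : Fintype.card V = mu * lam * (lam + 2))
    (hreg : G.IsRegularOfDegree (lam * (mu + 1)))
    (hlam : ∀ x y : V, G.Adj x y → Fintype.card (G.commonNeighbors x y) = lam)
    (C : Finset V) (hC : G.IsNClique (lam + 2) C)
    (x : V) (hx : x ∉ C) :
    (C.filter (fun c => G.Adj x c)).card = 1 := by
  classical
  have hCcard : C.card = lam + 2 := hC.card_eq
  -- Step 1: each outside vertex has at most one neighbor in C
  have hle : ∀ y : V, y ∉ C → (C.filter (fun c => G.Adj y c)).card ≤ 1 := by
    intro y hy
    by_contra h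
    push_neg at h
    obtain ⟨a, ha, b, hb, hab⟩ := Finset.one_lt_card.mp h
    simp only [Finset.mem_filter] at ha hb
    have hadj : G.Adj a b := hC.isClique ha.1 hb.1 hab
    have hcn := hlam a b hadj
    have hsub : insert y ((C.erase b).erase a) ⊆ (G.commonNeighbors a b).toFinset := by
      intro z hz
      rw [Set.mem_toFinset]
      rcases Finset.mem_insert.mp hz with rfl | hz
      · exact ⟨(ha.2).symm, (hb.2).symm⟩
      · simp only [Finset.mem_erase] at hz
        exact ⟨hC.isClique ha.1 hz.2.2 (Ne.symm hz.1),
               hC.isClique hb.1 hz.2.2 (Ne.symm hz.2.1)⟩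
    have hy' : y ∉ (C.erase b).erase a := fun hmem =>
      hy (Finset.mem_of_mem_erase (Finset.mem_of_mem_erase hmem))
    have hcard2 : (insert y ((C.erase b).erase a)).card = lam + 1 := by
      rw [Finset.card_insert_of_notMem hy', Finset.card_erase_of_mem
        (Finset.mem_erase.mpr ⟨hab, ha.1⟩), Finset.card_erase_of_mem hb.1, hCcard]
      omega
    have := Finset.card_le_card hsub
    rw [hcard2, Set.toFinset_card, hcn] at this
    omega
  -- Step 2: each vertex of C has exactly lam*mu - 1 neighbors outside C
  have hCdeg : ∀ c ∈ C, (Cᶜ.filter (fun y => G.Adj c y)).card = lam * mu - 1 := by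
    intro c hc
    have hsplit := Finset.card_filter_add_card_filter_not
      (s := G.neighborFinset c) (p := fun y => y ∈ C)
    have h1 : (G.neighborFinset c).filter (fun y => y ∈ C) = C.erase c := by
      ext y
      simp only [Finset.mem_filter, SimpleGraph.mem_neighborFinset, Finset.mem_erase]
      constructor
      · rintro ⟨hadj, hyC⟩; exact ⟨(G.ne_of_adj hadj).symm, hyC⟩
      · rintro ⟨hne, hyC⟩; exact ⟨hC.isClique hc hyC (Ne.symm hne), hyC⟩
    have h2 : (G.neighborFinset c).filter (fun y => ¬ y ∈ C)
        = Cᶜ.filter (fun y => G.Adj c y) := by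
      ext y
      simp only [Finset.mem_filter, SimpleGraph.mem_neighborFinset, Finset.mem_compl]
      tauto
    rw [h1, h2, Finset.card_erase_of_mem hc, hCcard,
      SimpleGraph.card_neighborFinset_eq_degree, hreg c] at hsplit
    have hexp : lam * (mu + 1) = lam * mu + lam := by ring
    omega
  -- Step 3: double counting
  have hswap : ∑ y ∈ Cᶜ, (C.filter (fun c => G.Adj y c)).card
      = ∑ c ∈ C, (Cᶜ.filter (fun y => G.Adj c y)).card := by
    simp only [Finset.card_filter]
    rw [Finset.sum_comm]
    refine Finset.sum_congr rfl fun c _ => Finset.sum_congr rfl fun y _ => ?_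
    exact if_congr (G.adj_comm y c) rfl rfl
  have hRHS : ∑ c ∈ C, (Cᶜ.filter (fun y => G.Adj c y)).card
      = (lam + 2) * (lam * mu - 1) := by
    rw [Finset.sum_congr rfl hCdeg, Finset.sum_const, hCcard, smul_eq_mul]
  have hcompl : Cᶜ.card = (lam + 2) * (lam * mu - 1) := by
    rw [Finset.card_compl, hCcard, hcard]
    have hm : 1 ≤ lam * mu := Nat.one_le_iff_ne_zero.mpr (by positivity)
    obtain ⟨m, hm'⟩ : ∃ m, lam * mu = m + 1 := ⟨lam * mu - 1, by omega⟩
    have h1 : mu * lam * (lam + 2) = (lam + 2) * m + (lam + 2) := by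
      have : mu * lam = m + 1 := by rw [mul_comm]; exact hm'
      rw [this]; ring
    rw [h1, hm', Nat.add_sub_cancel, Nat.add_sub_cancel]
  -- Step 4: conclude each is exactly 1
  by_contra hne
  have hx0 : (C.filter (fun c => G.Adj x c)).card = 0 := by
    have := hle x hx
    omega
  have hxmem : x ∈ Cᶜ := Finset.mem_compl.mpr hx
  have hlt : ∑ y ∈ Cᶜ, (C.filter (fun c => G.Adj y c)).card < Cᶜ.card := by
    rw [Finset.card_eq_sum_ones]
    exact Finset.sum_lt_sum (fun i hi => hle i (Finset.mem_compl.mp hi))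
      ⟨x, hxmem, by rw [hx0]; exact Nat.zero_lt_one⟩
  rw [hswap, hRHS, ← hcompl] at hlt
  exact lt_irrefl _ hlt
end

section
/- Let Γ be an edge-regular graph with parameters (16,6,2). If some vertex x of Γ has local graph isomorphic to the disjoint union of two triangles, then Γ is isomorphic to the 4×4 rook graph. -/
open scoped Classical

/-- The 4×4 rook graph. -/
def rook4 : SimpleGraph (Fin 4 × Fin 4) where
  Adj x y := x ≠ y ∧ (x.1 = y.1 ∨ x.2 = y.2)
  symm := by
    constructor
    rintro x y ⟨hne, h⟩
    exact ⟨hne.symm, by tauto⟩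
  loopless := by constructor; rintro x ⟨hne, -⟩; exact hne rfl

/-- The disjoint union of two triangles on {0,1,2} and {3,4,5}. -/
def twoTriangles : SimpleGraph (Fin 6) :=
  SimpleGraph.fromRel (fun a b => ((a : ℕ) < 3 ↔ (b : ℕ) < 3))


/-!
Every edge of an `(l + 2)`-clique `K` has its `l` common neighbours inside `K`. In an
edge-regular graph with parameters `((l + 2)², 2(l + 1), l)` it follows that, for `u ∈ K`, the
vertex `u` together with its neighbours outside `K` is again an `(l + 2)`-clique, and that the
`(l + 2)(l + 1)` neighbours outside `K` of the vertices of `K` are distinct, hence exhaust the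
complement of `K`. Take for `A` and `B` the two triangles of the local graph at `x`, each
together with `x`. The cliques crossing `B` and those crossing `A` then form two families of
lines, each covering the vertex set, and a line of one family meets a line of the other in at
most one vertex, since two `(l + 2)`-cliques sharing an edge coincide. The two line indices
give a bijection onto `K_{l+2} □ K_{l+2}` that maps rook edges to edges; as both graphs are
regular of the same degree, it is an isomorphism.
-/

namespace SimpleGraph

open Finset

variable {V : Type*} {G : SimpleGraph V}

section EdgeRegular

variable [Fintype V] [DecidableEq V] [DecidableRel G.Adj] {l : ℕ} {K : Finset V}

theorem card_commonNeighbors_eq_card_inter (u v : V) :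
    Fintype.card (G.commonNeighbors u v) = #(G.neighborFinset u ∩ G.neighborFinset v) := by
  rw [← Set.toFinset_card]
  congr 1
  ext w
  simp [mem_commonNeighbors]

theorem inter_neighborFinset_eq_sdiff_of_isNClique
    (hl : ∀ u v, G.Adj u v → #(G.neighborFinset u ∩ G.neighborFinset v) = l)
    (hK : G.IsNClique (l + 2) K) {u v : V} (hu : u ∈ K) (hv : v ∈ K) (huv : u ≠ v) :
    G.neighborFinset u ∩ G.neighborFinset v = K \ {u, v} := by
  symm
  refine eq_of_subset_of_card_le (fun w hw => ?_) ?_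
  · obtain ⟨hwK, hw⟩ := mem_sdiff.1 hw
    simp only [mem_insert, mem_singleton, not_or] at hw
    simp only [mem_inter, mem_neighborFinset]
    exact ⟨hK.isClique hu hwK (Ne.symm hw.1), hK.isClique hv hwK (Ne.symm hw.2)⟩
  · rw [hl u v (hK.isClique hu hv huv), card_sdiff_of_subset (by simp [insert_subset_iff, hu, hv]),
      hK.card_eq, card_pair huv]
    simp

theorem mem_of_adj_of_isNClique
    (hl : ∀ u v, G.Adj u v → #(G.neighborFinset u ∩ G.neighborFinset v) = l)
    (hK : G.IsNClique (l + 2) K) {u v w : V} (hu : u ∈ K) (hv : v ∈ K) (huv : u ≠ v)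
    (hwu : G.Adj u w) (hwv : G.Adj v w) : w ∈ K := by
  have hw : w ∈ G.neighborFinset u ∩ G.neighborFinset v := by simp [hwu, hwv]
  rw [inter_neighborFinset_eq_sdiff_of_isNClique hl hK hu hv huv] at hw
  exact (mem_sdiff.1 hw).1

theorem card_neighborFinset_sdiff_of_isNClique (hreg : G.IsRegularOfDegree (2 * (l + 1)))
    (hK : G.IsNClique (l + 2) K) {u : V} (hu : u ∈ K) :
    #(G.neighborFinset u \ K) = l + 1 := by
  have hinter : G.neighborFinset u ∩ K = K.erase u := by
    ext w
    simp only [mem_inter, mem_neighborFinset, mem_erase]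
    exact ⟨fun h => ⟨h.1.ne', h.2⟩, fun h => ⟨hK.isClique hu h.2 h.1.symm, h.2⟩⟩
  have := card_sdiff_add_card_inter (G.neighborFinset u) K
  rw [hinter, card_erase_of_mem hu, hK.card_eq, card_neighborFinset_eq_degree,
    hreg.degree_eq] at this
  omega

/-- When `K` is a line of a rook graph through `u`, this is the other line through `u`. -/
def crossClique (G : SimpleGraph V) [DecidableRel G.Adj] (K : Finset V) (u : V) : Finset V :=
  insert u (G.neighborFinset u \ K)

theorem mem_crossClique {u w : V} :
    w ∈ G.crossClique K u ↔ w = u ∨ G.Adj u w ∧ w ∉ K := by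
  simp [crossClique]

theorem isNClique_crossClique (hreg : G.IsRegularOfDegree (2 * (l + 1)))
    (hl : ∀ u v, G.Adj u v → #(G.neighborFinset u ∩ G.neighborFinset v) = l)
    (hK : G.IsNClique (l + 2) K) {u : V} (hu : u ∈ K) :
    G.IsNClique (l + 2) (G.crossClique K u) := by
  have hcard := card_neighborFinset_sdiff_of_isNClique hreg hK hu
  have hcommon : ∀ y ∈ G.neighborFinset u \ K,
      G.neighborFinset u ∩ G.neighborFinset y = (G.neighborFinset u \ K).erase y := by
    intro y hy
    obtain ⟨huy, hyK⟩ := mem_sdiff.1 hy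
    rw [mem_neighborFinset] at huy
    refine eq_of_subset_of_card_le (fun c hc => ?_) ?_
    · simp only [mem_inter, mem_neighborFinset] at hc
      refine mem_erase.2
        ⟨hc.2.ne', mem_sdiff.2 ⟨(mem_neighborFinset _ _ _).2 hc.1, fun hcK => ?_⟩⟩
      exact hyK (mem_of_adj_of_isNClique hl hK hu hcK hc.1.ne huy hc.2.symm)
    · rw [card_erase_of_mem hy, hcard, hl u y huy]
      simp
  refine IsNClique.insert ⟨fun y hy z hz hyz => ?_, hcard⟩ fun y hy => ?_
  · have hz' : z ∈ G.neighborFinset u ∩ G.neighborFinset y := by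
      rw [hcommon y hy]
      exact mem_erase.2 ⟨Ne.symm hyz, hz⟩
    exact (mem_neighborFinset _ _ _).1 (mem_inter.1 hz').2
  · exact (mem_neighborFinset _ _ _).1 (mem_sdiff.1 hy).1

theorem eq_of_isNClique_of_mem
    (hl : ∀ u v, G.Adj u v → #(G.neighborFinset u ∩ G.neighborFinset v) = l)
    {C C' : Finset V} (hC : G.IsNClique (l + 2) C) (hC' : G.IsNClique (l + 2) C')
    {y z : V} (hy : y ∈ C) (hz : z ∈ C) (hy' : y ∈ C') (hz' : z ∈ C') (hyz : y ≠ z) :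
    C = C' := by
  have h := (inter_neighborFinset_eq_sdiff_of_isNClique hl hC hy hz hyz).symm.trans
    (inter_neighborFinset_eq_sdiff_of_isNClique hl hC' hy' hz' hyz)
  calc C = C \ {y, z} ∪ {y, z} :=
        (sdiff_union_of_subset (by simp [insert_subset_iff, hy, hz])).symm
    _ = C' \ {y, z} ∪ {y, z} := by rw [h]
    _ = C' := sdiff_union_of_subset (by simp [insert_subset_iff, hy', hz'])

theorem exists_adj_of_notMem_isNClique (hcard : Fintype.card V = (l + 2) ^ 2)
    (hreg : G.IsRegularOfDegree (2 * (l + 1)))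
    (hl : ∀ u v, G.Adj u v → #(G.neighborFinset u ∩ G.neighborFinset v) = l)
    (hK : G.IsNClique (l + 2) K) {y : V} (hy : y ∉ K) : ∃ u ∈ K, G.Adj u y := by
  have hdisj : (K : Set V).PairwiseDisjoint (fun u => G.neighborFinset u \ K) := by
    intro u hu u' hu' huu'
    rw [Function.onFun, Finset.disjoint_left]
    intro c hc hc'
    refine (mem_sdiff.1 hc).2 ?_
    exact mem_of_adj_of_isNClique hl hK hu hu' huu'
      ((mem_neighborFinset _ _ _).1 (mem_sdiff.1 hc).1)
      ((mem_neighborFinset _ _ _).1 (mem_sdiff.1 hc').1)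
  have hsub : K.biUnion (fun u => G.neighborFinset u \ K) ⊆ Kᶜ := by
    intro c hc
    obtain ⟨u, -, hc⟩ := mem_biUnion.1 hc
    exact mem_compl.2 (mem_sdiff.1 hc).2
  have hcover : K.biUnion (fun u => G.neighborFinset u \ K) = Kᶜ := by
    refine eq_of_subset_of_card_le hsub ?_
    rw [card_biUnion hdisj, sum_congr rfl fun u hu =>
      card_neighborFinset_sdiff_of_isNClique hreg hK hu, sum_const, card_compl, hK.card_eq,
      hcard, smul_eq_mul]
    have : (l + 2) ^ 2 = (l + 2) * (l + 1) + (l + 2) := by ring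
    omega
  obtain ⟨u, hu, hyu⟩ := mem_biUnion.1 (hcover ▸ mem_compl.2 hy)
  exact ⟨u, hu, (mem_neighborFinset _ _ _).1 (mem_sdiff.1 hyu).1⟩

theorem exists_mem_crossClique (hcard : Fintype.card V = (l + 2) ^ 2)
    (hreg : G.IsRegularOfDegree (2 * (l + 1)))
    (hl : ∀ u v, G.Adj u v → #(G.neighborFinset u ∩ G.neighborFinset v) = l)
    (hK : G.IsNClique (l + 2) K) (y : V) : ∃ u ∈ K, y ∈ G.crossClique K u := by
  by_cases hy : y ∈ K
  · exact ⟨y, hy, mem_crossClique.2 (Or.inl rfl)⟩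
  · obtain ⟨u, hu, huy⟩ := exists_adj_of_notMem_isNClique hcard hreg hl hK hy
    exact ⟨u, hu, mem_crossClique.2 (Or.inr ⟨huy, hy⟩)⟩

theorem not_adj_of_inter_eq_singleton
    (hl : ∀ u v, G.Adj u v → #(G.neighborFinset u ∩ G.neighborFinset v) = l)
    {A B : Finset V} (hA : G.IsNClique (l + 2) A) (hB : G.IsNClique (l + 2) B) {x : V}
    (hAB : A ∩ B = {x}) {a b : V} (ha : a ∈ A) (hb : b ∈ B) (hax : a ≠ x) (hbx : b ≠ x) :
    ¬ G.Adj a b := by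
  have hx : x ∈ A ∩ B := hAB ▸ mem_singleton_self x
  intro hab
  have hbA : b ∈ A := mem_of_adj_of_isNClique hl hA ha (mem_inter.1 hx).1 hax hab
    (hB.isClique (mem_inter.1 hx).2 hb hbx.symm)
  exact hbx (mem_singleton.1 (hAB ▸ mem_inter.2 ⟨hbA, hb⟩))

theorem subsingleton_crossClique_inter_crossClique (hreg : G.IsRegularOfDegree (2 * (l + 1)))
    (hl : ∀ u v, G.Adj u v → #(G.neighborFinset u ∩ G.neighborFinset v) = l)
    {A B : Finset V} (hA : G.IsNClique (l + 2) A) (hB : G.IsNClique (l + 2) B) {x : V}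
    (hAB : A ∩ B = {x}) {a b : V} (ha : a ∈ A) (hb : b ∈ B) :
    ((G.crossClique B b : Set V) ∩ G.crossClique A a).Subsingleton := by
  have hxA : x ∈ A := (mem_inter.1 (hAB ▸ mem_singleton_self x)).1
  have hxB : x ∈ B := (mem_inter.1 (hAB ▸ mem_singleton_self x)).2
  have hmem_inter {c : V} (hcA : c ∈ A) (hcB : c ∈ B) : c = x :=
    mem_singleton.1 (hAB ▸ mem_inter.2 ⟨hcA, hcB⟩)
  rintro y ⟨hyB, hyA⟩ z ⟨hzB, hzA⟩
  by_contra hyz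
  have hC : G.crossClique B b = G.crossClique A a :=
    eq_of_isNClique_of_mem hl (isNClique_crossClique hreg hl hB hb)
      (isNClique_crossClique hreg hl hA ha) hyB hzB hyA hzA hyz
  have haB := hC ▸ mem_crossClique.2 (Or.inl rfl : a = a ∨ _)
  have hbA := hC.symm ▸ mem_crossClique.2 (Or.inl rfl : b = b ∨ _)
  rw [mem_crossClique] at haB hbA
  -- The common line contains `a` and `b`: either `a = b = x`, and then it contains all of `A`,
  -- or `a` and `b` are adjacent vertices of `A` and `B` other than `x`.
  rcases haB with rfl | ⟨hba, haB⟩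
  · obtain rfl := hmem_inter ha hb
    obtain ⟨c, hcA, hcx⟩ := exists_mem_ne (by rw [hA.card_eq]; omega) a
    have hcC : c ∈ G.crossClique B a :=
      mem_crossClique.2
        (Or.inr ⟨hA.isClique ha hcA hcx.symm, fun hcB => hcx (hmem_inter hcA hcB)⟩)
    rcases mem_crossClique.1 (hC ▸ hcC) with h | ⟨-, h⟩
    exacts [hcx h, h hcA]
  · rcases hbA with rfl | ⟨-, hbA⟩
    · exact hba.ne rfl
    exact not_adj_of_inter_eq_singleton hl hA hB hAB ha hb (fun h => haB (h ▸ hxB))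
      (fun h => hbA (h ▸ hxA)) hba.symm

end EdgeRegular

theorem nonempty_iso_of_forall_adj_of_isRegularOfDegree {W : Type*} {H : SimpleGraph W}
    [G.LocallyFinite] [H.LocallyFinite] {d : ℕ} (φ : V ≃ W)
    (hG : G.IsRegularOfDegree d) (hH : H.IsRegularOfDegree d)
    (hφ : ∀ u w, H.Adj (φ u) (φ w) → G.Adj u w) : Nonempty (G ≃g H) := by
  refine ⟨⟨φ, fun {u w} => ⟨hφ u w, fun huw => ?_⟩⟩⟩
  have hsub : (H.neighborFinset (φ u)).map φ.symm.toEmbedding ⊆ G.neighborFinset u := by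
    intro w hw
    obtain ⟨w', hw', rfl⟩ := mem_map.1 hw
    exact (mem_neighborFinset _ _ _).2 (hφ _ _ (by simpa using hw'))
  have heq := eq_of_subset_of_card_le hsub (by
    rw [card_map, card_neighborFinset_eq_degree, card_neighborFinset_eq_degree, hG.degree_eq,
      hH.degree_eq])
  have hw : w ∈ (H.neighborFinset (φ u)).map φ.symm.toEmbedding :=
    heq ▸ (mem_neighborFinset _ _ _).2 huw
  simpa using hw

theorem nonempty_iso_boxProd_top_of_isClique [Fintype V] [G.LocallyFinite] {ι κ : Type*}
    [Fintype ι] [Fintype κ] [DecidableEq ι] [DecidableEq κ]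
    (L : ι → Set V) (M : κ → Set V)
    (hL : ∀ i, G.IsClique (L i)) (hM : ∀ j, G.IsClique (M j))
    (hLcover : ∀ u, ∃ i, u ∈ L i) (hMcover : ∀ u, ∃ j, u ∈ M j)
    (hLM : ∀ i j, (L i ∩ M j).Subsingleton)
    (hcard : Fintype.card V = Fintype.card ι * Fintype.card κ)
    (hreg : G.IsRegularOfDegree (Fintype.card ι - 1 + (Fintype.card κ - 1))) :
    Nonempty (G ≃g (⊤ : SimpleGraph ι) □ (⊤ : SimpleGraph κ)) := by
  choose r hr using hLcover
  choose c hc using hMcover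
  have hinj : Function.Injective fun u => (r u, c u) := by
    intro u w h
    simp only [Prod.mk.injEq] at h
    exact hLM (r u) (c u) ⟨hr u, hc u⟩ ⟨h.1 ▸ hr w, h.2 ▸ hc w⟩
  have hbij : Function.Bijective fun u => (r u, c u) :=
    (Fintype.bijective_iff_injective_and_card _).2 ⟨hinj, by simp [hcard]⟩
  refine nonempty_iso_of_forall_adj_of_isRegularOfDegree (Equiv.ofBijective _ hbij) hreg
    (fun p => by rw [degree_boxProd, IsRegularOfDegree.top.degree_eq,
      IsRegularOfDegree.top.degree_eq]) fun u w huw => ?_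
  rcases boxProd_adj.1 huw with ⟨hne, hcw⟩ | ⟨hne, hrw⟩
  · exact hM (c u) (hc u) ((show c u = c w from hcw) ▸ hc w) fun h => hne (h ▸ rfl)
  · exact hL (r u) (hr u) ((show r u = r w from hrw) ▸ hr w) fun h => hne (h ▸ rfl)

theorem nonempty_iso_boxProd_top_of_isNClique_inter_eq_singleton [Fintype V] [DecidableEq V]
    [DecidableRel G.Adj] {l : ℕ}
    (hcard : Fintype.card V = (l + 2) ^ 2) (hreg : G.IsRegularOfDegree (2 * (l + 1)))
    (hl : ∀ u v, G.Adj u v → #(G.neighborFinset u ∩ G.neighborFinset v) = l)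
    {A B : Finset V} (hA : G.IsNClique (l + 2) A) (hB : G.IsNClique (l + 2) B) {x : V}
    (hAB : A ∩ B = {x}) :
    Nonempty (G ≃g (⊤ : SimpleGraph (Fin (l + 2))) □ (⊤ : SimpleGraph (Fin (l + 2)))) := by
  let eA := A.equivFinOfCardEq hA.card_eq
  let eB := B.equivFinOfCardEq hB.card_eq
  refine nonempty_iso_boxProd_top_of_isClique (fun i => G.crossClique B (eB.symm i))
    (fun j => G.crossClique A (eA.symm j))
    (fun i => (isNClique_crossClique hreg hl hB (eB.symm i).2).isClique)
    (fun j => (isNClique_crossClique hreg hl hA (eA.symm j).2).isClique) (fun u => ?_)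
    (fun u => ?_) (fun i j => subsingleton_crossClique_inter_crossClique hreg hl hA hB hAB
      (eA.symm j).2 (eB.symm i).2) (by simp [hcard, sq]) (by convert hreg using 1; simp; ring)
  · obtain ⟨b, hb, hu⟩ := exists_mem_crossClique hcard hreg hl hB u
    exact ⟨eB ⟨b, hb⟩, by simpa using hu⟩
  · obtain ⟨a, ha, hu⟩ := exists_mem_crossClique hcard hreg hl hA u
    exact ⟨eA ⟨a, ha⟩, by simpa using hu⟩

theorem isNClique_insert_map_of_embedding_induce [DecidableEq V] {W : Type*}
    {H : SimpleGraph W} {x : V}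
    (f : H ↪g G.induce (G.neighborSet x)) {n : ℕ} {s : Finset W} (hs : H.IsNClique n s) :
    G.IsNClique (n + 1)
      (insert x (s.map (f.toEmbedding.trans (Function.Embedding.subtype _)))) := by
  refine IsNClique.insert ⟨?_, by simp [hs.card_eq]⟩ fun b hb => ?_
  · intro p hp q hq hpq
    obtain ⟨i, hi, rfl⟩ := mem_map.1 hp
    obtain ⟨j, hj, rfl⟩ := mem_map.1 hq
    exact f.map_adj_iff.2 (hs.isClique hi hj fun h => hpq (h ▸ rfl))
  · obtain ⟨i, -, rfl⟩ := mem_map.1 hb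
    exact (f i).2

end SimpleGraph

open SimpleGraph Finset

theorem rook4_eq_boxProd_top :
    rook4 = (⊤ : SimpleGraph (Fin 4)) □ (⊤ : SimpleGraph (Fin 4)) := by
  ext p q
  simp only [rook4, boxProd_adj, top_adj, ne_eq, Prod.ext_iff]
  tauto

theorem isNClique_twoTriangles (p : Prop) [Decidable p] :
    twoTriangles.IsNClique 3 {i | (i : ℕ) < 3 ↔ p} := by
  refine ⟨fun i hi j hj hij => ?_, ?_⟩
  · simp only [coe_filter, mem_univ, true_and, Set.mem_ofPred_eq] at hi hj
    exact (fromRel_adj _ _ _).2 ⟨hij, Or.inl (hi.trans hj.symm)⟩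
  · by_cases hp : p <;> simp [hp] <;> decide

/-- If an edge-regular graph with parameters (16,6,2) has a vertex whose local
graph is the disjoint union of two triangles, then it is the 4×4 rook graph. -/
theorem rook_characterization (V : Type*) [Fintype V] [DecidableEq V]
    (G : SimpleGraph V) [DecidableRel G.Adj]
    (hcard : Fintype.card V = 16)
    (hreg : G.IsRegularOfDegree 6)
    (hlam : ∀ u v : V, G.Adj u v → Fintype.card (G.commonNeighbors u v) = 2)
    (x : V) (hx : Nonempty (G.induce (G.neighborSet x) ≃g twoTriangles)) :
    Nonempty (G ≃g rook4) := by
  obtain ⟨e⟩ := hx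
  have hl : ∀ u v, G.Adj u v → #(G.neighborFinset u ∩ G.neighborFinset v) = 2 :=
    fun u v huv => card_commonNeighbors_eq_card_inter (G := G) u v ▸ hlam u v huv
  have hA := isNClique_insert_map_of_embedding_induce e.symm.toEmbedding
    (isNClique_twoTriangles True)
  have hB := isNClique_insert_map_of_embedding_induce e.symm.toEmbedding
    (isNClique_twoTriangles False)
  rw [rook4_eq_boxProd_top]
  refine nonempty_iso_boxProd_top_of_isNClique_inter_eq_singleton (l := 2) (x := x) hcard hreg hl
    hA hB ?_
  rw [← insert_inter_distrib, ← map_inter, ← filter_and]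
  simp [filter_false_of_mem]
end

section
/- Let Γ be an edge-regular graph with parameters (16,6,2) in which some vertex lies in a 4-clique. Then every vertex of Γ lies in exactly two 4-cliques, and any two distinct 4-cliques through a common vertex meet exactly in that vertex. -/
/-!
Fix a vertex `x` on a 4-clique `C`. For `a ∈ C \ {x}` the two common neighbours of `x` and `a`
are already the other two vertices of `C`, so `C \ {x}` is a triangle of the local graph at `x`
with no edges to the remaining three neighbours `D` of `x`. Then every `d ∈ D` finds its two
common neighbours with `x` inside `D`, so `D` is a triangle as well, and `{x} ∪ D` is a second
4-clique. Since two 4-cliques sharing an edge coincide, these are the only 4-cliques through `x`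
and they meet only in `x`.

Hence the set of vertices lying on a 4-clique is closed under adjacency. A nonempty set closed
under adjacency contains the neighbourhoods of two adjacent vertices, so at least
`6 + 6 - 2 = 10` vertices; as `10 + 10 > 16`, its complement must be empty.
-/

open Finset

namespace SimpleGraph

variable {V : Type*} [Fintype V] [DecidableEq V] {G : SimpleGraph V} [DecidableRel G.Adj]
  {k l : ℕ}

lemma card_neighborFinset_inter (u v : V) :
    #(G.neighborFinset u ∩ G.neighborFinset v) = Fintype.card (G.commonNeighbors u v) := by
  rw [← Set.toFinset_card]
  congr 1
  ext w
  simp [mem_commonNeighbors]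

lemma IsNClique.card_neighborFinset_sdiff (hreg : G.IsRegularOfDegree k) {n : ℕ} {C : Finset V}
    (hC : G.IsNClique (n + 1) C) {x : V} (hx : x ∈ C) : #(G.neighborFinset x \ C) = k - n := by
  have hsub : C.erase x ⊆ G.neighborFinset x := fun a ha =>
    (mem_neighborFinset _ _ _).2 (hC.isClique hx (mem_of_mem_erase ha) (ne_of_mem_erase ha).symm)
  have hsdiff : G.neighborFinset x \ C = G.neighborFinset x \ C.erase x := by
    ext d
    simp only [mem_sdiff, mem_erase, mem_neighborFinset]
    exact ⟨fun ⟨h, hC⟩ => ⟨h, fun h' => hC h'.2⟩, fun ⟨h, hC⟩ => ⟨h, fun h' => hC ⟨h.ne.symm, h'⟩⟩⟩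
  rw [hsdiff, card_sdiff_of_subset hsub, card_neighborFinset_eq_degree, hreg x,
    card_erase_of_mem hx, hC.card_eq, Nat.add_sub_cancel]

section EdgeRegular

variable (hlam : ∀ u v : V, G.Adj u v → Fintype.card (G.commonNeighbors u v) = l)
include hlam

lemma IsNClique.neighborFinset_inter_eq {C : Finset V} (hC : G.IsNClique (l + 2) C) {x a : V}
    (hx : x ∈ C) (ha : a ∈ C) (hxa : x ≠ a) :
    G.neighborFinset x ∩ G.neighborFinset a = (C.erase x).erase a := by
  refine (eq_of_subset_of_card_le (fun b hb => ?_) ?_).symm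
  · obtain ⟨hba, hbx, hb⟩ : b ≠ a ∧ b ≠ x ∧ b ∈ C := by simpa using hb
    simp only [mem_inter, mem_neighborFinset]
    exact ⟨hC.isClique hx hb hbx.symm, hC.isClique ha hb hba.symm⟩
  · rw [card_neighborFinset_inter, hlam x a (hC.isClique hx ha hxa),
      card_erase_of_mem (mem_erase.2 ⟨hxa.symm, ha⟩), card_erase_of_mem hx, hC.card_eq]
    omega

lemma IsNClique.eq_of_mem_of_mem {C E : Finset V} (hC : G.IsNClique (l + 2) C)
    (hE : G.IsNClique (l + 2) E) {x a : V} (hxa : x ≠ a) (hxC : x ∈ C) (haC : a ∈ C)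
    (hxE : x ∈ E) (haE : a ∈ E) : C = E := by
  have hrest : (E.erase x).erase a = (C.erase x).erase a := by
    refine eq_of_subset_of_card_le ?_ ?_
    · rw [← hC.neighborFinset_inter_eq hlam hxC haC hxa,
        ← hE.neighborFinset_inter_eq hlam hxE haE hxa]
    · rw [card_erase_of_mem (mem_erase.2 ⟨hxa.symm, haC⟩), card_erase_of_mem hxC, hC.card_eq,
        card_erase_of_mem (mem_erase.2 ⟨hxa.symm, haE⟩), card_erase_of_mem hxE, hE.card_eq]
  rw [← insert_erase hxC, ← insert_erase (mem_erase.2 ⟨hxa.symm, haC⟩), ← hrest,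
    insert_erase (mem_erase.2 ⟨hxa.symm, haE⟩), insert_erase hxE]

lemma IsNClique.inter_eq_singleton {C E : Finset V} (hC : G.IsNClique (l + 2) C)
    (hE : G.IsNClique (l + 2) E) (hne : C ≠ E) {x : V} (hxC : x ∈ C) (hxE : x ∈ E) :
    C ∩ E = {x} := by
  ext y
  simp only [mem_inter, mem_singleton]
  refine ⟨fun ⟨hyC, hyE⟩ => ?_, by rintro rfl; exact ⟨hxC, hxE⟩⟩
  by_contra hyx
  exact hne (hC.eq_of_mem_of_mem hlam hE (Ne.symm hyx) hxC hyC hxE hyE)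

lemma IsNClique.not_adj_of_mem_sdiff {C : Finset V} (hC : G.IsNClique (l + 2) C) {x a d : V}
    (hx : x ∈ C) (ha : a ∈ C) (hxa : x ≠ a) (hd : d ∈ G.neighborFinset x \ C) :
    ¬ G.Adj a d := fun had => by
  have hd' : d ∈ G.neighborFinset x ∩ G.neighborFinset a := by
    simp only [mem_inter, mem_neighborFinset]
    exact ⟨(mem_neighborFinset _ _ _).1 (mem_sdiff.1 hd).1, had⟩
  rw [hC.neighborFinset_inter_eq hlam hx ha hxa] at hd'
  exact (mem_sdiff.1 hd).2 (mem_of_mem_erase (mem_of_mem_erase hd'))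

variable (hreg : G.IsRegularOfDegree (2 * l + 2))
include hreg

lemma IsNClique.isNClique_insert_neighborFinset_sdiff {C : Finset V}
    (hC : G.IsNClique (l + 2) C) {x : V} (hx : x ∈ C) :
    G.IsNClique (l + 2) (insert x (G.neighborFinset x \ C)) := by
  set D := G.neighborFinset x \ C
  have hD : #D = l + 1 := (hC.card_neighborFinset_sdiff hreg hx).trans (by omega)
  have hlocal : ∀ d ∈ D, G.neighborFinset x ∩ G.neighborFinset d = D.erase d := by
    intro d hd
    have hxd : G.Adj x d := (mem_neighborFinset _ _ _).1 (mem_sdiff.1 hd).1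
    refine eq_of_subset_of_card_le (fun b hb => ?_) ?_
    · simp only [mem_inter, mem_neighborFinset] at hb
      refine mem_erase.2 ⟨hb.2.ne.symm, mem_sdiff.2 ⟨(mem_neighborFinset _ _ _).2 hb.1, ?_⟩⟩
      exact fun hbC => hC.not_adj_of_mem_sdiff hlam hx hbC hb.1.ne hd hb.2.symm
    · rw [card_erase_of_mem hd, hD, card_neighborFinset_inter, hlam x d hxd]
      omega
  have hDclique : G.IsNClique (l + 1) D := by
    refine ⟨fun d hd d' hd' hne => ?_, hD⟩
    have h := (hlocal d hd).symm ▸ mem_erase.2 ⟨Ne.symm hne, hd'⟩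
    exact (mem_neighborFinset _ _ _).1 (mem_inter.1 h).2
  exact hDclique.insert fun d hd => (mem_neighborFinset _ _ _).1 (mem_sdiff.1 hd).1

lemma IsNClique.filter_mem_cliqueFinset_eq_pair {C : Finset V} (hC : G.IsNClique (l + 2) C)
    {x : V} (hx : x ∈ C) :
    {E ∈ G.cliqueFinset (l + 2) | x ∈ E} = {C, insert x (G.neighborFinset x \ C)} := by
  have hC' := hC.isNClique_insert_neighborFinset_sdiff hlam hreg hx
  ext E
  simp only [mem_filter, mem_cliqueFinset_iff, mem_insert, mem_singleton]
  refine ⟨fun ⟨hE, hxE⟩ => ?_, ?_⟩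
  · by_cases hmeet : ∃ a ∈ E, a ≠ x ∧ a ∈ C
    · obtain ⟨a, haE, hax, haC⟩ := hmeet
      exact Or.inl (hC.eq_of_mem_of_mem hlam hE hax.symm hx haC hxE haE).symm
    · push Not at hmeet
      have hsub : E.erase x ⊆ G.neighborFinset x \ C := fun a ha =>
        mem_sdiff.2 ⟨(mem_neighborFinset _ _ _).2
          (hE.isClique hxE (mem_of_mem_erase ha) (ne_of_mem_erase ha).symm),
          hmeet a (mem_of_mem_erase ha) (ne_of_mem_erase ha)⟩
      have heq : E.erase x = G.neighborFinset x \ C := by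
        refine eq_of_subset_of_card_le hsub ?_
        rw [hC.card_neighborFinset_sdiff hreg hx, card_erase_of_mem hxE, hE.card_eq]
        omega
      exact Or.inr (by rw [← heq, insert_erase hxE])
  · rintro (rfl | rfl)
    · exact ⟨hC, hx⟩
    · exact ⟨hC', mem_insert_self _ _⟩

lemma IsNClique.card_filter_mem_cliqueFinset {C : Finset V} (hC : G.IsNClique (l + 2) C)
    {x : V} (hx : x ∈ C) : #{E ∈ G.cliqueFinset (l + 2) | x ∈ E} = 2 := by
  rw [hC.filter_mem_cliqueFinset_eq_pair hlam hreg hx, card_pair]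
  obtain ⟨d, hd⟩ : (G.neighborFinset x \ C).Nonempty := by
    rw [← card_pos, hC.card_neighborFinset_sdiff hreg hx]
    omega
  exact fun h => (mem_sdiff.1 hd).2 (h ▸ mem_insert_of_mem hd)

lemma IsNClique.exists_mem_of_adj {C : Finset V} (hC : G.IsNClique (l + 2) C) {x y : V}
    (hx : x ∈ C) (hxy : G.Adj x y) : ∃ E ∈ G.cliqueFinset (l + 2), y ∈ E := by
  by_cases hyC : y ∈ C
  · exact ⟨C, mem_cliqueFinset_iff.2 hC, hyC⟩
  · refine ⟨_, mem_cliqueFinset_iff.2 (hC.isNClique_insert_neighborFinset_sdiff hlam hreg hx),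
      mem_insert_of_mem (mem_sdiff.2 ⟨(mem_neighborFinset _ _ _).2 hxy, hyC⟩)⟩

end EdgeRegular

section AdjClosed

variable (hreg : G.IsRegularOfDegree k)
  (hlam : ∀ u v : V, G.Adj u v → Fintype.card (G.commonNeighbors u v) = l)
include hreg hlam

lemma two_mul_le_card_add_of_adj_closed {T : Finset V} (hT : T.Nonempty)
    (hclosed : ∀ x ∈ T, ∀ y, G.Adj x y → y ∈ T) : 2 * k ≤ #T + l := by
  obtain ⟨u, hu⟩ := hT
  rcases (G.neighborFinset u).eq_empty_or_nonempty with hempty | ⟨w, hw⟩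
  · have : k = 0 := by rw [← hreg u, ← card_neighborFinset_eq_degree, hempty, card_empty]
    omega
  have huw : G.Adj u w := (mem_neighborFinset _ _ _).1 hw
  have hsub : G.neighborFinset u ∪ G.neighborFinset w ⊆ T := by
    intro z hz
    simp only [mem_union, mem_neighborFinset] at hz
    rcases hz with hz | hz
    · exact hclosed u hu z hz
    · exact hclosed w (hclosed u hu w huw) z hz
  have hunion := card_union_add_card_inter (G.neighborFinset u) (G.neighborFinset w)
  rw [card_neighborFinset_inter, hlam u w huw, card_neighborFinset_eq_degree,
    card_neighborFinset_eq_degree, hreg u, hreg w] at hunion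
  have := card_le_card hsub
  omega

lemma eq_univ_of_adj_closed (hn : Fintype.card V + 2 * l < 4 * k) {T : Finset V}
    (hT : T.Nonempty) (hclosed : ∀ x ∈ T, ∀ y, G.Adj x y → y ∈ T) : T = univ := by
  rw [← compl_eq_empty_iff, ← not_nonempty_iff_eq_empty]
  intro hTc
  have hclosedc : ∀ x ∈ Tᶜ, ∀ y, G.Adj x y → y ∈ Tᶜ := fun x hx y hxy =>
    mem_compl.2 fun hy => mem_compl.1 hx (hclosed y hy x hxy.symm)
  have h₁ := two_mul_le_card_add_of_adj_closed hreg hlam hT hclosed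
  have h₂ := two_mul_le_card_add_of_adj_closed hreg hlam hTc hclosedc
  have h₃ := card_add_card_compl T
  omega

end AdjClosed

end SimpleGraph

open SimpleGraph

/-- In an edge-regular graph with parameters (16,6,2) having some vertex in a
4-clique, every vertex lies in exactly two 4-cliques, and any two distinct
4-cliques through a common vertex meet exactly in that vertex. -/
theorem two_four_cliques (V : Type*) [Fintype V] [DecidableEq V]
    (G : SimpleGraph V) [DecidableRel G.Adj]
    (hcard : Fintype.card V = 16)
    (hreg : G.IsRegularOfDegree 6)
    (hlam : ∀ u v : V, G.Adj u v → Fintype.card (G.commonNeighbors u v) = 2)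
    (hexists : ∃ x : V, ∃ C ∈ G.cliqueFinset 4, x ∈ C) :
    (∀ x : V, ((G.cliqueFinset 4).filter (fun C => x ∈ C)).card = 2) ∧
    (∀ x : V, ∀ C₁ ∈ G.cliqueFinset 4, ∀ C₂ ∈ G.cliqueFinset 4,
      C₁ ≠ C₂ → x ∈ C₁ → x ∈ C₂ → C₁ ∩ C₂ = {x}) := by
  set S : Finset V := {x | ∃ C ∈ G.cliqueFinset 4, x ∈ C}
  have hS : S = univ := by
    refine eq_univ_of_adj_closed hreg hlam (by omega) ?_ ?_
    · obtain ⟨x, hx⟩ := hexists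
      exact ⟨x, mem_filter.2 ⟨mem_univ x, hx⟩⟩
    · intro x hx y hxy
      obtain ⟨C, hC, hxC⟩ := (mem_filter.1 hx).2
      exact mem_filter.2 ⟨mem_univ y,
        (mem_cliqueFinset_iff.1 hC).exists_mem_of_adj hlam hreg hxC hxy⟩
  refine ⟨fun x => ?_, fun x C₁ hC₁ C₂ hC₂ hne hx₁ hx₂ => ?_⟩
  · obtain ⟨C, hC, hxC⟩ := (mem_filter.1 (hS ▸ mem_univ x : x ∈ S)).2
    exact (mem_cliqueFinset_iff.1 hC).card_filter_mem_cliqueFinset hlam hreg hxC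
  · exact (mem_cliqueFinset_iff.1 hC₁).inter_eq_singleton hlam (mem_cliqueFinset_iff.1 hC₂) hne
      hx₁ hx₂
end

section
/- Let Γ be a graph whose vertex set is partitioned into four 4-cycles C1, C2, C3, C4, such that between consecutive cycles (C1,C2), (C2,C3), (C3,C4), (C4,C1) every vertex x of one cycle is adjacent to exactly the two vertices of an edge of the next cycle, with distinct vertices of a cycle being assigned distinct edges of the next cycle consecutively (type (1) connection), and no other edges between different cycles. Then Γ is a 6-regular graph on 16 vertices in which every edge lies in exactly 2 triangles. -/
/-!
Vertex `(i, a)` is vertex `a` of the cycle `Cᵢ₊₁`, and cycle `i` is `a ∼ a + 1` in `ℤ/4`.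
Since `f i (a + 1) = f i a + 1`, the connection from cycle `i` to cycle `i + 1` is the
translation by the offset `c i = f i 0`, so the graph is determined by `c`. Rotating cycle `i`
by `t i` changes the offsets to `c i + t (i + 1) - t i`, so only the total twist `∑ i, c i`
matters: every such graph is isomorphic to one where the first three connections are straight
and the last one is twisted by a rotation `s`. For each of the four values of `s` the claim is
a finite check.
-/

/-- Each edge is recorded once, either inside a cycle or from cycle `i` to cycle `i + 1`. -/
def stackRel (c : Fin 4 → Fin 4) (v w : Fin 4 × Fin 4) : Prop :=
  (w.1 = v.1 ∧ w.2 = v.2 + 1) ∨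
    (w.1 = v.1 + 1 ∧ (w.2 = c v.1 + v.2 ∨ w.2 = c v.1 + v.2 + 1))

instance (c : Fin 4 → Fin 4) : DecidableRel (stackRel c) := fun _ _ => by
  unfold stackRel; infer_instance

def stackGraph (c : Fin 4 → Fin 4) : SimpleGraph (Fin 4 × Fin 4) :=
  .fromRel (stackRel c)

instance (c : Fin 4 → Fin 4) : DecidableRel (stackGraph c).Adj :=
  inferInstanceAs (DecidableRel (SimpleGraph.fromRel _).Adj)

theorem stackGraph_adj {c : Fin 4 → Fin 4} {v w : Fin 4 × Fin 4} :
    (stackGraph c).Adj v w ↔ v ≠ w ∧ (stackRel c v w ∨ stackRel c w v) :=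
  Iff.rfl

open Fin.NatCast in
theorem Fin.eq_add_of_map_add_one {n : ℕ} [NeZero n] {g : Fin n → Fin n}
    (hg : ∀ a, g (a + 1) = g a + 1) (a : Fin n) : g a = g 0 + a := by
  suffices ∀ k : ℕ, g k = g 0 + k by simpa using this a.val
  intro k
  induction k with
  | zero => simp
  | succ k ih => rw [Nat.cast_succ, hg, ih, add_assoc]

def rotateCycles (t : Fin 4 → Fin 4) : Fin 4 × Fin 4 ≃ Fin 4 × Fin 4 :=
  (Equiv.refl _).prodShear fun i => Equiv.addRight (t i)

theorem stackRel_rotateCycles {c d t : Fin 4 → Fin 4} (h : ∀ k, d k + t k = c k + t (k + 1))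
    (v w : Fin 4 × Fin 4) :
    stackRel d (rotateCycles t v) (rotateCycles t w) ↔ stackRel c v w := by
  obtain ⟨i, a⟩ := v
  obtain ⟨j, b⟩ := w
  simp only [stackRel, rotateCycles, Equiv.prodShear_apply, Equiv.refl_apply, Equiv.coe_addRight]
  grind [h i]

theorem eq_stackGraph {G : SimpleGraph (Fin 4 × Fin 4)} {f : Fin 4 → Fin 4 → Fin 4}
    (hcyc : ∀ i a b, G.Adj (i, a) (i, b) ↔ (b = a + 1 ∨ a = b + 1))
    (hf : ∀ i a, f i (a + 1) = f i a + 1)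
    (hnext : ∀ i a b, G.Adj (i, a) (i + 1, b) ↔ (b = f i a ∨ b = f i a + 1))
    (hfar : ∀ i a b, ¬ G.Adj (i, a) (i + 2, b)) :
    G = stackGraph fun i => f i 0 := by
  have hfa (i : Fin 4) : f i = (f i 0 + ·) := funext (Fin.eq_add_of_map_add_one (hf i))
  ext ⟨i, a⟩ ⟨j, b⟩
  have hji : j = i ∨ j = i + 1 ∨ i = j + 1 ∨ j = i + 2 := by revert i j; decide
  rcases hji with rfl | rfl | rfl | rfl
  · rw [hcyc, stackGraph_adj]
    grind [stackRel]
  · rw [hnext, hfa, stackGraph_adj]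
    grind [stackRel]
  · rw [G.adj_comm, hnext, hfa, stackGraph_adj]
    grind [stackRel]
  · simp only [hfar, false_iff, stackGraph_adj]
    grind [stackRel]

def stackGraph.isoOfRotation {c d t : Fin 4 → Fin 4} (h : ∀ k, d k + t k = c k + t (k + 1)) :
    stackGraph c ≃g stackGraph d where
  toEquiv := rotateCycles t
  map_rel_iff' := by
    simp only [stackGraph_adj, (rotateCycles t).injective.ne_iff, stackRel_rotateCycles h,
      implies_true]

def stackGraph.isoTwist (c : Fin 4 → Fin 4) :
    stackGraph c ≃g stackGraph ![0, 0, 0, ∑ i, c i] :=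
  isoOfRotation (t := ![0, -c 0, -c 0 - c 1, -c 0 - c 1 - c 2]) fun k => by
    fin_cases k <;> simp [Fin.sum_univ_four]
    abel

theorem SimpleGraph.Iso.isRegularOfDegree {V W : Type*} {G : SimpleGraph V}
    {G' : SimpleGraph W}
    [G.LocallyFinite] [G'.LocallyFinite] (e : G ≃g G') {d : ℕ} (h : G.IsRegularOfDegree d) :
    G'.IsRegularOfDegree d := fun v => by
  rw [← e.apply_symm_apply v, e.degree_eq]
  exact h _

theorem SimpleGraph.Iso.card_commonNeighbors {V W : Type*} {G : SimpleGraph V}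
    {G' : SimpleGraph W} (e : G ≃g G') (u v : V) [Fintype (G.commonNeighbors u v)]
    [Fintype (G'.commonNeighbors (e u) (e v))] :
    Fintype.card (G'.commonNeighbors (e u) (e v)) = Fintype.card (G.commonNeighbors u v) :=
  Fintype.card_congr <| (e.toEquiv.subtypeEquiv fun w => by
    simp [SimpleGraph.mem_commonNeighbors, e.map_adj_iff]).symm

theorem isRegularOfDegree_stackGraph_twist (s : Fin 4) :
    (stackGraph ![0, 0, 0, s]).IsRegularOfDegree 6 := by
  unfold SimpleGraph.IsRegularOfDegree
  revert s
  decide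

theorem card_commonNeighbors_stackGraph_twist (s : Fin 4) {u v : Fin 4 × Fin 4}
    (h : (stackGraph ![0, 0, 0, s]).Adj u v) :
    Fintype.card ((stackGraph ![0, 0, 0, s]).commonNeighbors u v) = 2 := by
  revert s u v
  decide

/-- A graph on four 4-cycles, with type (1) connections between consecutive
cycles (possibly twisted) and no other edges, is a 6-regular graph on 16
vertices in which every edge lies in exactly 2 triangles. -/
theorem type1_stacking (G : SimpleGraph (Fin 4 × Fin 4)) [DecidableRel G.Adj]
    -- each cycle `{i} × Fin 4` induces a 4-cycle
    (hcyc : ∀ (i : Fin 4) (a b : Fin 4),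
      G.Adj (i, a) (i, b) ↔ (b = a + 1 ∨ a = b + 1))
    -- type (1) connections between consecutive cycles: vertex a of cycle i is
    -- adjacent exactly to the edge {f i a, f i a + 1} of cycle i+1, with
    -- consecutive vertices assigned consecutive edges
    (f : Fin 4 → Fin 4 → Fin 4)
    (hf : ∀ (i : Fin 4) (a : Fin 4), f i (a + 1) = f i a + 1)
    (hnext : ∀ (i : Fin 4) (a b : Fin 4),
      G.Adj (i, a) (i + 1, b) ↔ (b = f i a ∨ b = f i a + 1))
    -- no edges between non-consecutive cycles
    (hfar : ∀ (i : Fin 4) (a b : Fin 4), ¬ G.Adj (i, a) (i + 2, b)) :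
    Fintype.card (Fin 4 × Fin 4) = 16 ∧
    G.IsRegularOfDegree 6 ∧
    (∀ u v : Fin 4 × Fin 4, G.Adj u v →
      Fintype.card (G.commonNeighbors u v) = 2) := by
  obtain rfl := eq_stackGraph hcyc hf hnext hfar
  let e := stackGraph.isoTwist fun i => f i 0
  refine ⟨rfl, e.symm.isRegularOfDegree (isRegularOfDegree_stackGraph_twist _),
    fun u v huv => ?_⟩
  rw [← e.card_commonNeighbors]
  exact card_commonNeighbors_stackGraph_twist _ (e.map_adj_iff.mpr huv)
end

section
/- Suppose C1 and C2 are two vertex-disjoint 4-cycles inside an edge-regular graph Γ with parameters (16,6,2) such that any two adjacent vertices of C1 have exactly one common neighbour in C2 and any two adjacent vertices of C2 have exactly one common neighbour in C1. For each vertex x of C1, let E_x be the set of edges {y,z} of C2 with both y and z adjacent to x. Then the sets E_x for x ranging over C1 are pairwise disjoint, their union is the set of all 4 edges of C2, and each |E_x| ∈ {0,1,2}. -/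
open Finset

/-- Given two vertex-disjoint induced 4-cycles C1, C2 in an edge-regular graph
with parameters (16,6,2) such that adjacent vertices of one cycle have exactly
one common neighbour in the other, the sets E_x (of edges of C2 lying in the
neighbourhood of a vertex x of C1, encoded by the index of their starting
vertex) are pairwise disjoint, cover all 4 edges of C2, and satisfy |E_x| ≤ 2. -/
theorem edge_sets_partition (V : Type*) [Fintype V] [DecidableEq V]
    (G : SimpleGraph V) [DecidableRel G.Adj]
    (hcard : Fintype.card V = 16)
    (hreg : G.IsRegularOfDegree 6)
    (hlam : ∀ u v : V, G.Adj u v → Fintype.card (G.commonNeighbors u v) = 2)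
    (c₁ c₂ : Fin 4 → V)
    (hinj₁ : Function.Injective c₁) (hinj₂ : Function.Injective c₂)
    (hdisj : ∀ i j : Fin 4, c₁ i ≠ c₂ j)
    (hadj₁ : ∀ i : Fin 4, G.Adj (c₁ i) (c₁ (i + 1)))
    (hind₁ : ∀ i : Fin 4, ¬ G.Adj (c₁ i) (c₁ (i + 2)))
    (hadj₂ : ∀ i : Fin 4, G.Adj (c₂ i) (c₂ (i + 1)))
    (hind₂ : ∀ i : Fin 4, ¬ G.Adj (c₂ i) (c₂ (i + 2)))
    -- adjacent vertices of C1 have exactly one common neighbour in C2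
    (h12 : ∀ i : Fin 4,
      (univ.filter (fun j : Fin 4 =>
        G.Adj (c₁ i) (c₂ j) ∧ G.Adj (c₁ (i + 1)) (c₂ j))).card = 1)
    -- adjacent vertices of C2 have exactly one common neighbour in C1
    (h21 : ∀ j : Fin 4,
      (univ.filter (fun i : Fin 4 =>
        G.Adj (c₂ j) (c₁ i) ∧ G.Adj (c₂ (j + 1)) (c₁ i))).card = 1) :
    -- E x encodes the edges {c₂ j, c₂ (j+1)} of C2 in the neighbourhood of c₁ x
    letI E : Fin 4 → Finset (Fin 4) := fun x =>
      univ.filter (fun j : Fin 4 => G.Adj (c₁ x) (c₂ j) ∧ G.Adj (c₁ x) (c₂ (j + 1)))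
    (∀ x y : Fin 4, x ≠ y → Disjoint (E x) (E y)) ∧
    ((univ : Finset (Fin 4)).biUnion E = univ) ∧
    (∀ x : Fin 4, (E x).card ≤ 2) := by
  have hE : ∀ x j : Fin 4, j ∈ univ.filter
      (fun j : Fin 4 => G.Adj (c₁ x) (c₂ j) ∧ G.Adj (c₁ x) (c₂ (j + 1))) ↔
      G.Adj (c₁ x) (c₂ j) ∧ G.Adj (c₁ x) (c₂ (j + 1)) := by
    intro x j; simp
  have hfix1 : ∀ k : Fin 4, k - 1 + 1 = k := by decide
  have hfix2 : ∀ k : Fin 4, k + 3 + 1 = k := by decide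
  have hne13 : ∀ k : Fin 4, k + 1 ≠ k + 3 := by decide
  have hnekm : ∀ k : Fin 4, k ≠ k - 1 := by decide
  refine ⟨?_, ?_, ?_⟩
  · -- disjointness
    intro x y hxy
    rw [Finset.disjoint_left]
    intro j hjx hjy
    apply hxy
    exact Finset.card_le_one.mp (le_of_eq (h21 j)) x (by
      simp only [Finset.mem_filter, Finset.mem_univ, true_and]
      exact ⟨((hE x j).mp hjx).1.symm, ((hE x j).mp hjx).2.symm⟩) y (by
      simp only [Finset.mem_filter, Finset.mem_univ, true_and]
      exact ⟨((hE y j).mp hjy).1.symm, ((hE y j).mp hjy).2.symm⟩)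
  · -- cover
    apply Finset.eq_univ_of_forall
    intro j
    have hne : (univ.filter (fun i : Fin 4 =>
        G.Adj (c₂ j) (c₁ i) ∧ G.Adj (c₂ (j + 1)) (c₁ i))).Nonempty := by
      rw [← Finset.card_pos, h21 j]; norm_num
    obtain ⟨i, hi⟩ := hne
    simp only [Finset.mem_filter, Finset.mem_univ, true_and] at hi
    exact Finset.mem_biUnion.mpr ⟨i, Finset.mem_univ i, (hE i j).mpr ⟨hi.1.symm, hi.2.symm⟩⟩
  · -- card bound
    intro x
    by_contra hc
    push_neg at hc
    have h3 : 3 ≤ (univ.filter (fun j : Fin 4 => G.Adj (c₁ x) (c₂ j) ∧ G.Adj (c₁ x) (c₂ (j + 1)))).card := hc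
    -- c₁ x is adjacent to every vertex of C2
    have hadjall : ∀ k : Fin 4, G.Adj (c₁ x) (c₂ k) := by
      intro k
      have hk : k ∈ univ.filter (fun j : Fin 4 => G.Adj (c₁ x) (c₂ j) ∧ G.Adj (c₁ x) (c₂ (j + 1))) ∨ k - 1 ∈ univ.filter (fun j : Fin 4 => G.Adj (c₁ x) (c₂ j) ∧ G.Adj (c₁ x) (c₂ (j + 1))) := by
        by_contra hk
        push_neg at hk
        have hsub : univ.filter (fun j : Fin 4 => G.Adj (c₁ x) (c₂ j) ∧ G.Adj (c₁ x) (c₂ (j + 1))) ⊆ (univ : Finset (Fin 4)) \ {k, k - 1} := by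
          intro j hj
          simp only [Finset.mem_sdiff, Finset.mem_univ, Finset.mem_insert,
            Finset.mem_singleton, true_and]
          push_neg
          exact ⟨fun h => hk.1 (h ▸ hj), fun h => hk.2 (h ▸ hj)⟩
        have hle := Finset.card_le_card hsub
        have hc2 : ((univ : Finset (Fin 4)) \ {k, k - 1}).card = 2 := by
          rw [Finset.card_sdiff_of_subset (Finset.subset_univ _),
            Finset.card_insert_of_notMem (by simpa using hnekm k),
            Finset.card_singleton]
          simp
        omega
      rcases hk with hk | hk
      · exact ((hE x k).mp hk).1
      · have h := ((hE x (k - 1)).mp hk).2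
        rwa [hfix1 k] at h
    -- get the common neighbour of c₁ x and c₁ (x+1) in C2
    have hne : (univ.filter (fun j : Fin 4 =>
        G.Adj (c₁ x) (c₂ j) ∧ G.Adj (c₁ (x + 1)) (c₂ j))).Nonempty := by
      rw [← Finset.card_pos, h12 x]; norm_num
    obtain ⟨j, hj⟩ := hne
    simp only [Finset.mem_filter, Finset.mem_univ, true_and] at hj
    -- c₂ (j+1), c₂ (j+3), c₁ (x+1) are three common neighbours of c₁ x and c₂ j
    have hS : ({c₂ (j + 1), c₂ (j + 3), c₁ (x + 1)} : Finset V)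
        ⊆ (G.commonNeighbors (c₁ x) (c₂ j)).toFinset := by
      intro v hv
      simp only [Finset.mem_insert, Finset.mem_singleton] at hv
      rw [Set.mem_toFinset]
      rcases hv with rfl | rfl | rfl
      · exact ⟨hadjall (j + 1), hadj₂ j⟩
      · refine ⟨hadjall (j + 3), ?_⟩
        have h := hadj₂ (j + 3)
        rw [hfix2 j] at h
        exact h.symm
      · exact ⟨hadj₁ x, hj.2.symm⟩
    have hcard3 : ({c₂ (j + 1), c₂ (j + 3), c₁ (x + 1)} : Finset V).card = 3 := by
      rw [Finset.card_insert_of_notMem, Finset.card_insert_of_notMem,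
        Finset.card_singleton]
      · simp only [Finset.mem_singleton]
        exact hdisj (x + 1) (j + 3) ∘ Eq.symm
      · simp only [Finset.mem_insert, Finset.mem_singleton]
        push_neg
        exact ⟨fun h => hne13 j (hinj₂ h), hdisj (x + 1) (j + 1) ∘ Eq.symm⟩
    have hle := Finset.card_le_card hS
    rw [hcard3, Set.toFinset_card, hlam _ _ (hadjall j)] at hle
    omega
end

section
/- Let Γ be a strongly regular graph with parameters (16,6,2,2) and let C be a 4-clique in Γ. Then C is a regular clique with nexus 1: every vertex outside C has exactly one neighbour in C. -/
open Finset

/-- Outside a 4-clique in an SRG(16,6,2,2), each vertex has at most one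
neighbour in the clique. -/
lemma srg_aux_le_one (V : Type*) [Fintype V] [DecidableEq V]
    (G : SimpleGraph V) [DecidableRel G.Adj]
    (h : G.IsSRGWith 16 6 2 2)
    (C : Finset V) (hC : G.IsNClique 4 C)
    (x : V) (hx : x ∉ C) :
    (C.filter (fun c => G.Adj x c)).card ≤ 1 := by
  by_contra hgt
  push_neg at hgt
  obtain ⟨a, ha, b, hb, hab⟩ := Finset.one_lt_card.mp hgt
  simp only [mem_filter] at ha hb
  have hadj : G.Adj a b := hC.1 ha.1 hb.1 hab
  have hcn : Fintype.card (G.commonNeighbors a b) = 2 := h.of_adj a b hadj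
  -- insert x ((C.erase a).erase b) ⊆ common neighbors, card 3
  have hsub : insert x ((C.erase a).erase b) ⊆ (G.commonNeighbors a b).toFinset := by
    intro y hy
    rw [Set.mem_toFinset, SimpleGraph.mem_commonNeighbors]
    rcases Finset.mem_insert.mp hy with rfl | hy
    · exact ⟨(ha.2).symm, (hb.2).symm⟩
    · have hyb := Finset.mem_erase.mp hy
      have hya := Finset.mem_erase.mp hyb.2
      exact ⟨hC.1 ha.1 hya.2 (fun e => hya.1 e.symm),
             hC.1 hb.1 hya.2 (fun e => hyb.1 e.symm)⟩
  have hcard : (insert x ((C.erase a).erase b)).card = 3 := by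
    have hxne : x ∉ (C.erase a).erase b := fun hm =>
      hx (Finset.mem_of_mem_erase (Finset.mem_of_mem_erase hm))
    rw [Finset.card_insert_of_notMem hxne,
        Finset.card_erase_of_mem (Finset.mem_erase.mpr ⟨fun e => hab e.symm, hb.1⟩),
        Finset.card_erase_of_mem ha.1, hC.2]
  have := Finset.card_le_card hsub
  rw [hcard, Set.toFinset_card, hcn] at this
  omega

/-- In a strongly regular graph with parameters (16,6,2,2), every 4-clique is
a regular clique with nexus 1. -/
theorem srg_16_6_2_2_clique_nexus_one (V : Type*) [Fintype V] [DecidableEq V]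
    (G : SimpleGraph V) [DecidableRel G.Adj]
    (h : G.IsSRGWith 16 6 2 2)
    (C : Finset V) (hC : G.IsNClique 4 C)
    (x : V) (hx : x ∉ C) :
    (C.filter (fun c => G.Adj x c)).card = 1 := by
  classical
  -- For each c ∈ C, the number of neighbours of c outside C is 3.
  have hout : ∀ c ∈ C, (Cᶜ.filter (fun y => G.Adj y c)).card = 3 := by
    intro c hc
    have heq : Cᶜ.filter (fun y => G.Adj y c) = G.neighborFinset c \ C := by
      ext y
      simp only [mem_filter, mem_compl, mem_sdiff, SimpleGraph.mem_neighborFinset]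
      exact ⟨fun ⟨h1, h2⟩ => ⟨h2.symm, h1⟩, fun ⟨h1, h2⟩ => ⟨h2, h1.symm⟩⟩
    have hsub : C.erase c ⊆ G.neighborFinset c := by
      intro y hy
      have := Finset.mem_erase.mp hy
      exact SimpleGraph.mem_neighborFinset _ _ _ |>.mpr (hC.1 hc this.2 (fun e => this.1 e.symm))
    have hsetd : G.neighborFinset c \ C = G.neighborFinset c \ C.erase c := by
      ext y
      simp only [mem_sdiff, Finset.mem_erase, SimpleGraph.mem_neighborFinset]
      constructor
      · rintro ⟨h1, h2⟩; exact ⟨h1, fun ⟨_, hyC⟩ => h2 hyC⟩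
      · rintro ⟨h1, h2⟩
        refine ⟨h1, fun hyC => h2 ⟨fun e => G.irrefl (e ▸ h1), hyC⟩⟩
    rw [heq, hsetd, Finset.card_sdiff_of_subset hsub, Finset.card_erase_of_mem hc, hC.2]
    have : (G.neighborFinset c).card = 6 := h.regular c
    omega
  -- Double counting: total edges from outside into C is 12.
  have hsum : ∑ y ∈ Cᶜ, (C.filter (fun c => G.Adj y c)).card = 12 := by
    have : ∑ y ∈ Cᶜ, (C.filter (fun c => G.Adj y c)).card
        = ∑ c ∈ C, (Cᶜ.filter (fun y => G.Adj y c)).card := by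
      simp only [Finset.card_filter]
      exact Finset.sum_comm
    rw [this, Finset.sum_congr rfl hout]
    simp [hC.2]
  have hcardCc : (Cᶜ : Finset V).card = 12 := by
    rw [Finset.card_compl, hC.2, h.card]
  -- Each term is ≤ 1 and there are 12 terms summing to 12, so each term is 1.
  have hxc : x ∈ (Cᶜ : Finset V) := Finset.mem_compl.mpr hx
  by_contra hne
  have hle := srg_aux_le_one V G h C hC x hx
  have hzero : (C.filter (fun c => G.Adj x c)).card = 0 := by omega
  have hsum' : ∑ y ∈ Cᶜ, (C.filter (fun c => G.Adj y c)).card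
      = ∑ y ∈ Cᶜ.erase x, (C.filter (fun c => G.Adj y c)).card := by
    rw [← Finset.sum_erase_add _ _ hxc, hzero, add_zero]
  have hbound : ∑ y ∈ Cᶜ.erase x, (C.filter (fun c => G.Adj y c)).card
      ≤ (Cᶜ.erase x).card * 1 := by
    apply Finset.sum_le_card_nsmul
    intro y hy
    exact srg_aux_le_one V G h C hC y (Finset.mem_compl.mp (Finset.mem_of_mem_erase hy))
  rw [Finset.card_erase_of_mem hxc, hcardCc] at hbound
  omega
end

section
/- The polynomial x^5 − 32x^3 + 64x^2 + 32x − 64 is irreducible over the rationals. -/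
open Polynomial

lemma linear_eq_zero {K : Type*} [Field K] {u v : K} (h : C u * X + C v = 0) :
    u = 0 ∧ v = 0 := by
  constructor
  · have := congrArg (fun p => Polynomial.coeff p 1) h
    simpa using this
  · have := congrArg (fun p => Polynomial.coeff p 0) h
    simpa using this

lemma monic_deg2_form {K : Type*} [Field K] (p : K[X]) (hm : p.Monic) (hd : p.natDegree = 2) :
    p = X ^ 2 + C (p.coeff 1) * X + C (p.coeff 0) := by
  have h3 : p.natDegree < 3 := by omega
  have h2 : p.coeff 2 = 1 := by
    have := hm.leadingCoeff
    rwa [leadingCoeff, hd] at this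
  conv_lhs => rw [p.as_sum_range' 3 h3]
  rw [Finset.sum_range_succ, Finset.sum_range_succ, Finset.sum_range_one, h2,
    ← C_mul_X_pow_eq_monomial, ← C_mul_X_pow_eq_monomial, ← C_mul_X_pow_eq_monomial]
  simp
  ring

lemma irr3 : Irreducible (X ^ 5 - C 32 * X ^ 3 + C 64 * X ^ 2 + C 32 * X - C 64 : (ZMod 3)[X]) := by
  set f : (ZMod 3)[X] := X ^ 5 - C 32 * X ^ 3 + C 64 * X ^ 2 + C 32 * X - C 64 with hf
  have hdeg : f.natDegree = 5 := by unfold f; compute_degree!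
  have hmon : f.Monic := by unfold f; monicity!
  have hne : f ≠ 0 := hmon.ne_zero
  -- no linear monic factor
  have hlin : ∀ c : ZMod 3, ¬ (X - C c) ∣ f := by
    intro c hdvd
    rw [dvd_iff_isRoot] at hdvd
    simp only [IsRoot, hf, eval_sub, eval_add, eval_mul, eval_pow, eval_X, eval_C] at hdvd
    have hall : ∀ c : ZMod 3, ¬ (c ^ 5 - 32 * c ^ 3 + 64 * c ^ 2 + 32 * c - 64 = 0) := by decide
    exact hall c hdvd
  -- no monic quadratic factor
  have hquad : ∀ a b : ZMod 3, ¬ (X ^ 2 + C a * X + C b) ∣ f := by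
    intro a b hdvd
    set q : (ZMod 3)[X] := X ^ 2 + C a * X + C b with hq
    set Q : (ZMod 3)[X] := X ^ 3 - C a * X ^ 2 + C (a ^ 2 - b - 32) * X
        + C (64 + a * b - a * (a ^ 2 - b - 32)) with hQ
    set r : (ZMod 3)[X] := C (32 - (a ^ 2 - b - 32) * b - (64 + a * b - a * (a ^ 2 - b - 32)) * a) * X
        + C (-64 - (64 + a * b - a * (a ^ 2 - b - 32)) * b) with hr
    have key : f = q * Q + r := by
      rw [hf, hq, hQ, hr]
      simp only [map_add, map_sub, map_mul, map_pow, map_neg, map_ofNat]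
      ring
    have hdr : q ∣ r := by
      have : r = f - q * Q := by rw [key]; ring
      rw [this]
      exact dvd_sub hdvd (Dvd.intro Q rfl)
    have hdegq : q.degree = 2 := by unfold q; compute_degree!
    have hr0 : r = 0 := by
      refine Polynomial.eq_zero_of_dvd_of_degree_lt hdr ?_
      calc r.degree ≤ 1 := by unfold r; exact degree_linear_le
        _ < 2 := by norm_num
        _ = q.degree := hdegq.symm
    obtain ⟨h1, h0⟩ := linear_eq_zero (hr ▸ hr0)
    have hall : ∀ a b : ZMod 3,
        ¬ (32 - (a ^ 2 - b - 32) * b - (64 + a * b - a * (a ^ 2 - b - 32)) * a = 0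
          ∧ -64 - (64 + a * b - a * (a ^ 2 - b - 32)) * b = 0) := by decide
    exact hall a b ⟨h1, h0⟩
  constructor
  · intro hu
    have := natDegree_eq_zero_of_isUnit hu
    omega
  · intro g h hgh
    by_contra hc
    push_neg at hc
    obtain ⟨hg, hh⟩ := hc
    have hgne : g ≠ 0 := fun h0 => hne (by rw [hgh, h0, zero_mul])
    have hhne : h ≠ 0 := fun h0 => hne (by rw [hgh, h0, mul_zero])
    have hgd : 0 < g.natDegree := by
      have hne0 : g.degree ≠ 0 := fun h0 => hg (isUnit_iff_degree_eq_zero.mpr h0)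
      exact natDegree_pos_iff_degree_pos.mpr
        (lt_of_le_of_ne (zero_le_degree_iff.mpr hgne) (Ne.symm hne0))
    have hhd : 0 < h.natDegree := by
      have hne0 : h.degree ≠ 0 := fun h0 => hh (isUnit_iff_degree_eq_zero.mpr h0)
      exact natDegree_pos_iff_degree_pos.mpr
        (lt_of_le_of_ne (zero_le_degree_iff.mpr hhne) (Ne.symm hne0))
    have hsum : g.natDegree + h.natDegree = 5 := by
      rw [← natDegree_mul hgne hhne, ← hgh, hdeg]
    obtain ⟨d, hdf, hd1, hd2⟩ : ∃ d : (ZMod 3)[X], d ∣ f ∧ 0 < d.natDegree ∧ d.natDegree ≤ 2 := by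
      rcases le_or_gt g.natDegree 2 with hle | hlt
      · exact ⟨g, ⟨h, hgh⟩, hgd, hle⟩
      · exact ⟨h, ⟨g, by rw [hgh]; ring⟩, hhd, by omega⟩
    set m : (ZMod 3)[X] := d * C (d.leadingCoeff)⁻¹ with hm
    have hdne : d ≠ 0 := fun h0 => by simp [h0] at hd1
    have hlcne : d.leadingCoeff ≠ 0 := leadingCoeff_ne_zero.2 hdne
    have hmm : m.Monic := monic_mul_leadingCoeff_inv hdne
    have hmf : m ∣ f := by
      refine dvd_trans ?_ hdf
      exact ⟨C d.leadingCoeff, by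
        rw [hm, mul_assoc, ← C_mul, inv_mul_cancel₀ hlcne, C_1, mul_one]⟩
    have hmd : m.natDegree = d.natDegree := by
      rw [hm, natDegree_mul hdne (fun hc => hlcne (by simpa [C_eq_zero, inv_eq_zero] using hc)),
        natDegree_C, add_zero]
    interval_cases hcase : d.natDegree
    · have h1 : m.natDegree = 1 := by omega
      have := hmm.eq_X_add_C h1
      apply hlin (-(m.coeff 0))
      rw [map_neg, sub_neg_eq_add, ← this]
      exact hmf
    · have h2 : m.natDegree = 2 := by omega
      have := monic_deg2_form m hmm h2
      apply hquad (m.coeff 1) (m.coeff 0)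
      rw [← this]
      exact hmf

/-- The polynomial x⁵ − 32x³ + 64x² + 32x − 64 is irreducible over ℚ. -/
theorem p5A_irreducible :
    Irreducible (X ^ 5 - C 32 * X ^ 3 + C 64 * X ^ 2 + C 32 * X - C 64 : ℚ[X]) := by
  have hmon : (X ^ 5 - C 32 * X ^ 3 + C 64 * X ^ 2 + C 32 * X - C 64 : ℤ[X]).Monic := by
    monicity!
  have hZ : Irreducible (X ^ 5 - C 32 * X ^ 3 + C 64 * X ^ 2 + C 32 * X - C 64 : ℤ[X]) := by
    apply hmon.irreducible_of_irreducible_map (Int.castRingHom (ZMod 3))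
    have : Polynomial.map (Int.castRingHom (ZMod 3))
        (X ^ 5 - C 32 * X ^ 3 + C 64 * X ^ 2 + C 32 * X - C 64 : ℤ[X])
        = (X ^ 5 - C 32 * X ^ 3 + C 64 * X ^ 2 + C 32 * X - C 64 : (ZMod 3)[X]) := by
      simp only [Polynomial.map_sub, Polynomial.map_add, Polynomial.map_mul, Polynomial.map_pow,
        Polynomial.map_X, Polynomial.map_C, Polynomial.map_ofNat, map_ofNat]
    rw [this]
    exact irr3
  have := (hmon.irreducible_iff_irreducible_map_fraction_map (K := ℚ)).mp hZ
  have hmap : Polynomial.map (algebraMap ℤ ℚ)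
      (X ^ 5 - C 32 * X ^ 3 + C 64 * X ^ 2 + C 32 * X - C 64 : ℤ[X])
      = (X ^ 5 - C 32 * X ^ 3 + C 64 * X ^ 2 + C 32 * X - C 64 : ℚ[X]) := by
    simp only [Polynomial.map_sub, Polynomial.map_add, Polynomial.map_mul, Polynomial.map_pow,
      Polynomial.map_X, Polynomial.map_C, Polynomial.map_ofNat, map_ofNat]
  rwa [hmap] at this
end
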